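/- arXiv:2501.14313 — 2 statements merged into one kernel-verified Lean document; each statement's English description precedes it below -/
import Mathlib

section
/- For any local redaction mechanism with output Y = (Y_1,…,Y_n), writing Y^{(ℓ)} = (Y_1,…,Y_p) and Y^{(r)} = (Y_p,…,Y_n), the privacy leakage satisfies L(X_p→Y) ≤ L(X_p→Y^{(ℓ)}) + L(X_p→Y^{(r)}). Consequently, any 3R mechanism with parameters ε_ℓ, ε_r > 0, ε_ℓ + ε_r ≤ ε, whose parameters q_t are chosen so that L(X_p→Y^{(ℓ)}) ≤ ε_ℓ and L(X_p→Y^{(r)}) ≤ ε_r, is ε-private. -/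
open Finset
open scoped Classical

noncomputable section

/-- Transition matrix of the two-state Markov chain:
`transP α β i j = Pr(X_{t+1} = j | X_t = i)` with `false ↔ 0`, `true ↔ 1`. -/
def transP (α β : ℝ) : Bool → Bool → ℝ
  | false, false => 1 - α
  | false, true  => α
  | true,  false => β
  | true,  true  => 1 - β

/-- Stationary distribution of the chain. -/
def statDist (α β : ℝ) : Bool → ℝ
  | false => β / (α + β)
  | true  => α / (α + β)

/-- Joint pmf of the stationary Markov chain `X_1, …, X_n` (0-indexed in Lean). -/
def jointX (α β : ℝ) {n : ℕ} (x : Fin n → Bool) : ℝ :=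
  if h : 0 < n then
    statDist α β (x ⟨0, h⟩) *
      ∏ i : Fin (n - 1),
        transP α β (x ⟨i.1, by have := i.2; omega⟩) (x ⟨i.1 + 1, by have := i.2; omega⟩)
  else 1

/-- Probability of an event under the chain. -/
def prX (α β : ℝ) {n : ℕ} (E : Set (Fin n → Bool)) : ℝ :=
  ∑ x : Fin n → Bool, E.indicator (jointX α β) x

/-- Conditional probability of the event `E` given the event `C`. -/
def condProb (α β : ℝ) {n : ℕ} (E C : Set (Fin n → Bool)) : ℝ :=
  prX α β (E ∩ C) / prX α β C

/-- `log (a / b)` valued in the extended reals: `⊥` when `a = 0` and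
`⊤` when `a > 0 = b` (ratios of probabilities, so nonnegative inputs). -/
def logRatio (a b : ℝ) : EReal :=
  if a ≤ 0 then ⊥ else if b ≤ 0 then ⊤ else ((Real.log (a / b) : ℝ) : EReal)

/-- Pointwise influence `i(X_p ⇝ X_S = g_S)`. -/
def pwInfl (α β : ℝ) {n : ℕ} (p : Fin n) (S : Finset (Fin n)) (g : Fin n → Bool) : EReal :=
  max
    (logRatio (condProb α β {x | ∀ t ∈ S, x t = g t} {x | x p = true})
              (condProb α β {x | ∀ t ∈ S, x t = g t} {x | x p = false}))
    (logRatio (condProb α β {x | ∀ t ∈ S, x t = g t} {x | x p = false})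
              (condProb α β {x | ∀ t ∈ S, x t = g t} {x | x p = true}))

/-- Pointwise influence on a single record: `i(X_p ⇝ X_t = b)`. -/
def pwInfl1 (α β : ℝ) {n : ℕ} (p t : Fin n) (b : Bool) : EReal :=
  pwInfl α β p {t} (fun _ => b)

/-- Max-influence `I(X_p ⇝ X_S)`. -/
def maxInfl (α β : ℝ) {n : ℕ} (p : Fin n) (S : Finset (Fin n)) : EReal :=
  ⨆ g : Fin n → Bool, pwInfl α β p S g

/-- Kernel of a local redaction mechanism with redaction probabilities
`r t x = Pr(Y_t = ⊥ | X_t = x)`: probability of the output `y` given the data `x`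
(`none` encodes the erasure symbol `⊥`). -/
def mechK {n : ℕ} (r : Fin n → Bool → ℝ) (x : Fin n → Bool) (y : Fin n → Option Bool) : ℝ :=
  ∏ t, (y t).elim (r t (x t)) (fun b => if b = x t then 1 - r t (x t) else 0)

/-- The redaction probabilities are genuine probabilities. -/
def validMech {n : ℕ} (r : Fin n → Bool → ℝ) : Prop :=
  ∀ t x, 0 ≤ r t x ∧ r t x ≤ 1

/-- Data-independent mechanism: the redaction probability does not depend on the data. -/
def dataIndep {n : ℕ} (r : Fin n → Bool → ℝ) : Prop :=
  ∀ t, r t false = r t true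

/-- Joint probability `Pr(X ∈ E, Y ∈ F)`. -/
def prXY (α β : ℝ) {n : ℕ} (r : Fin n → Bool → ℝ) (E : Set (Fin n → Bool))
    (F : Set (Fin n → Option Bool)) : ℝ :=
  ∑ x : Fin n → Bool, ∑ y : Fin n → Option Bool,
    E.indicator (jointX α β) x * F.indicator (mechK r x) y

/-- Output probability `Pr(Y ∈ F)`. -/
def prY (α β : ℝ) {n : ℕ} (r : Fin n → Bool → ℝ) (F : Set (Fin n → Option Bool)) : ℝ :=
  prXY α β r Set.univ F

/-- Conditional output probability `Pr(Y ∈ F | X_p = a)`. -/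
def condY (α β : ℝ) {n : ℕ} (r : Fin n → Bool → ℝ) (p : Fin n) (a : Bool)
    (F : Set (Fin n → Option Bool)) : ℝ :=
  prXY α β r {x | x p = a} F / prX α β {x | x p = a}

/-- Privacy leakage `L(X_p → Y_T)` of the marginal output on the index set `T`:
`log sup_{y_T ∈ supp, a} Pr(Y_T = y_T | X_p = a)/Pr(Y_T = y_T | X_p = ¬a)`. -/
def leakOn (α β : ℝ) {n : ℕ} (r : Fin n → Bool → ℝ) (p : Fin n) (T : Finset (Fin n)) : EReal :=
  ⨆ g : Fin n → Option Bool, ⨆ a : Bool,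
    logRatio (condY α β r p a {y | ∀ t ∈ T, y t = g t})
             (condY α β r p (!a) {y | ∀ t ∈ T, y t = g t})

/-- Privacy leakage `L(X_p → Y)`. -/
def leak (α β : ℝ) {n : ℕ} (r : Fin n → Bool → ℝ) (p : Fin n) : EReal :=
  leakOn α β r p univ

/-- Utility: expected fraction of correctly released records. -/
def utility (α β : ℝ) {n : ℕ} (r : Fin n → Bool → ℝ) : ℝ :=
  (1 / (n : ℝ)) * ∑ x : Fin n → Bool, ∑ y : Fin n → Option Bool,
    jointX α β x * mechK r x y * ∑ t, (if y t = some (x t) then (1 : ℝ) else 0)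

/-- Large-leakage region `R_{L|ε'}`. -/
def regL (α β : ℝ) {n : ℕ} (p : Fin n) (ε' : ℝ) : Finset (Fin n) :=
  univ.filter fun t =>
    (ε' : EReal) < pwInfl1 α β p t false ∧ pwInfl1 α β p t false ≤ pwInfl1 α β p t true

/-- Medium-leakage region `R_{M|ε'}`. -/
def regM (α β : ℝ) {n : ℕ} (p : Fin n) (ε' : ℝ) : Finset (Fin n) :=
  univ.filter fun t =>
    pwInfl1 α β p t false ≤ (ε' : EReal) ∧ (ε' : EReal) < pwInfl1 α β p t true

/-- Small-leakage region `R_{S|ε'}`. -/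
def regS (α β : ℝ) {n : ℕ} (p : Fin n) (ε' : ℝ) : Finset (Fin n) :=
  univ.filter fun t =>
    pwInfl1 α β p t false ≤ pwInfl1 α β p t true ∧ pwInfl1 α β p t true ≤ (ε' : EReal)

/-- `Q^{(ℓ)}`: elements of `Q` left of `p` (inclusive). -/
def leftOf {n : ℕ} (p : Fin n) (Q : Finset (Fin n)) : Finset (Fin n) := Q.filter (· ≤ p)

/-- `Q^{(r)}`: elements of `Q` right of `p` (inclusive). -/
def rightOf {n : ℕ} (p : Fin n) (Q : Finset (Fin n)) : Finset (Fin n) := Q.filter (p ≤ ·)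

/-- The region `S = R_{S|ε_ℓ}^{(ℓ)} ∪ R_{S|ε_r}^{(r)}` of a 3R mechanism. -/
def set3S (α β : ℝ) {n : ℕ} (p : Fin n) (εl εr : ℝ) : Finset (Fin n) :=
  leftOf p (regS α β p εl) ∪ rightOf p (regS α β p εr)

/-- The region `M = R_{M|ε_ℓ}^{(ℓ)} ∪ R_{M|ε_r}^{(r)}` of a 3R mechanism. -/
def set3M (α β : ℝ) {n : ℕ} (p : Fin n) (εl εr : ℝ) : Finset (Fin n) :=
  leftOf p (regM α β p εl) ∪ rightOf p (regM α β p εr)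

/-- The region `L = R_{L|ε_ℓ}^{(ℓ)} ∪ R_{L|ε_r}^{(r)}` of a 3R mechanism. -/
def set3L (α β : ℝ) {n : ℕ} (p : Fin n) (εl εr : ℝ) : Finset (Fin n) :=
  leftOf p (regL α β p εl) ∪ rightOf p (regL α β p εr)

/-- `r` is the 3R mechanism with regions `S`, `M`, `L` and redaction parameters `q`. -/
def is3R {n : ℕ} (r : Fin n → Bool → ℝ) (S M L : Finset (Fin n)) (q : Fin n → ℝ) : Prop :=
  ∀ t, (t ∈ L → ∀ x, r t x = 1) ∧ (t ∈ S → ∀ x, r t x = 0) ∧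
    (t ∈ M → r t false = q t ∧ r t true = 1)

/-- Closed form `i_low(Δ)`. -/
def iLow (α β : ℝ) (Δ : ℕ) : ℝ :=
  |Real.log ((1 + (α / β) * (1 - α - β) ^ Δ) / (1 - (1 - α - β) ^ Δ))|

/-- Closed form `i_high(Δ)`. -/
def iHigh (α β : ℝ) (Δ : ℕ) : ℝ :=
  |Real.log ((1 + (β / α) * (1 - α - β) ^ Δ) / (1 - (1 - α - β) ^ Δ))|

section Aux

variable {n : ℕ}

/-- Per-coordinate kernel of the local redaction mechanism. -/
def kk (r : Fin n → Bool → ℝ) (t : Fin n) (xt : Bool) (ob : Option Bool) : ℝ :=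
  ob.elim (r t xt) (fun b => if b = xt then 1 - r t xt else 0)

lemma kk_nonneg {r : Fin n → Bool → ℝ} (hr : validMech r) (t : Fin n) (xt : Bool)
    (ob : Option Bool) : 0 ≤ kk r t xt ob := by
  cases ob with
  | none => exact (hr t xt).1
  | some b =>
    simp only [kk, Option.elim]
    split
    · linarith [(hr t xt).2]
    · exact le_rfl

lemma sum_kk (r : Fin n → Bool → ℝ) (t : Fin n) (xt : Bool) :
    ∑ ob : Option Bool, kk r t xt ob = 1 := by
  rw [Fintype.sum_option]
  cases xt <;> simp [kk, Fintype.sum_bool]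

lemma mechK_eq (r : Fin n → Bool → ℝ) (x : Fin n → Bool) (y : Fin n → Option Bool) :
    mechK r x y = ∏ t, kk r t (x t) (y t) := rfl

/-- Marginalization: probability of a cylinder output event. -/
lemma prXY_cyl (α β : ℝ) (r : Fin n → Bool → ℝ) (E : Set (Fin n → Bool))
    (T : Finset (Fin n)) (g : Fin n → Option Bool) :
    prXY α β r E {y | ∀ t ∈ T, y t = g t} =
      ∑ x : Fin n → Bool, E.indicator (jointX α β) x * ∏ t ∈ T, kk r t (x t) (g t) := by
  unfold prXY
  refine Finset.sum_congr rfl fun x _ => ?_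
  rw [← Finset.mul_sum]
  congr 1
  have hpt : ∀ y : Fin n → Option Bool,
      Set.indicator {y : Fin n → Option Bool | ∀ t ∈ T, y t = g t} (mechK r x) y
        = ∏ t : Fin n,
            ((if t ∈ T then (if y t = g t then (1:ℝ) else 0) else 1) * kk r t (x t) (y t)) := by
    intro y
    rw [Finset.prod_mul_distrib, Finset.prod_ite_mem, Finset.univ_inter, Finset.prod_boole,
      ← mechK_eq, Set.indicator_apply]
    by_cases hy : ∀ t ∈ T, y t = g t
    · simp [hy, Set.mem_setOf_eq]
    · simp [hy, Set.mem_setOf_eq]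
  calc ∑ y : Fin n → Option Bool,
        Set.indicator {y : Fin n → Option Bool | ∀ t ∈ T, y t = g t} (mechK r x) y
      = ∑ y : Fin n → Option Bool, ∏ t : Fin n,
          ((if t ∈ T then (if y t = g t then (1:ℝ) else 0) else 1) * kk r t (x t) (y t)) :=
        Finset.sum_congr rfl fun y _ => hpt y
    _ = ∏ t : Fin n, ∑ ob : Option Bool,
          ((if t ∈ T then (if ob = g t then (1:ℝ) else 0) else 1) * kk r t (x t) ob) := by
        rw [Finset.prod_univ_sum]
        rw [Fintype.piFinset_univ]
    _ = ∏ t : Fin n, (if t ∈ T then kk r t (x t) (g t) else 1) := by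
        refine Finset.prod_congr rfl fun t _ => ?_
        by_cases ht : t ∈ T
        · simp only [ht, if_true, ite_mul, one_mul, zero_mul]
          rw [Finset.sum_ite_eq']
          simp
        · simp only [ht, if_false, one_mul]
          exact sum_kk r t (x t)
    _ = ∏ t ∈ T, kk r t (x t) (g t) := by
        rw [Finset.prod_ite_mem, Finset.univ_inter]

end Aux
section Aux2

variable {n : ℕ} {α β : ℝ}

lemma transP_pos (hα : 0 < α) (hαβ : α ≤ β) (hβ : β < 1) (i j : Bool) :
    0 < transP α β i j := by
  cases i <;> cases j <;> simp [transP] <;> linarith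

lemma statDist_pos (hα : 0 < α) (hαβ : α ≤ β) (hβ : β < 1) (i : Bool) :
    0 < statDist α β i := by
  have h : 0 < α + β := by linarith
  have hb : 0 < β := lt_of_lt_of_le hα hαβ
  cases i
  · exact div_pos hb h
  · exact div_pos hα h

lemma jointX_pos (hα : 0 < α) (hαβ : α ≤ β) (hβ : β < 1) (x : Fin n → Bool) :
    0 < jointX α β x := by
  unfold jointX
  split
  · exact mul_pos (statDist_pos hα hαβ hβ _)
      (Finset.prod_pos fun i _ => transP_pos hα hαβ hβ _ _)
  · exact one_pos

lemma prX_pos (hα : 0 < α) (hαβ : α ≤ β) (hβ : β < 1) (p : Fin n) (a : Bool) :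
    0 < prX α β {x : Fin n → Bool | x p = a} := by
  unfold prX
  refine Finset.sum_pos' (fun i _ => Set.indicator_nonneg
    (fun x _ => (jointX_pos hα hαβ hβ x).le) i) ?_
  refine ⟨fun _ => a, Finset.mem_univ _, ?_⟩
  rw [Set.indicator_of_mem (by simp [Set.mem_setOf_eq])]
  exact jointX_pos hα hαβ hβ _

lemma indicator_setOf (p : Fin n) (a : Bool) (x : Fin n → Bool) :
    Set.indicator {x : Fin n → Bool | x p = a} (jointX α β) x
      = if x p = a then jointX α β x else 0 := by
  rw [Set.indicator_apply]
  simp [Set.mem_setOf_eq]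

/-- Splice two configurations at `p`. -/
def splice (p : Fin n) (x y : Fin n → Bool) : Fin n → Bool := fun t => if t ≤ p then x t else y t

lemma splice_apply_le {p : Fin n} {x y : Fin n → Bool} {t : Fin n} (ht : t ≤ p) :
    splice p x y t = x t := if_pos ht

lemma splice_apply_ge {p : Fin n} {x y : Fin n → Bool} (hxy : x p = y p) {t : Fin n}
    (ht : p ≤ t) : splice p x y t = y t := by
  unfold splice
  split
  · have h : t = p := le_antisymm ‹t ≤ p› ht
    rw [h, hxy]
  · rfl

lemma splice_pair (α β : ℝ) (p : Fin n) (x y : Fin n → Bool) (hxy : x p = y p)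
    (s t : Fin n) (hst : s.1 + 1 = t.1) :
    transP α β (splice p x y s) (splice p x y t) * transP α β (splice p y x s) (splice p y x t)
      = transP α β (x s) (x t) * transP α β (y s) (y t) := by
  by_cases hc : t ≤ p
  · have hs : s ≤ p := by rw [Fin.le_def] at hc ⊢; omega
    rw [splice_apply_le hs, splice_apply_le hc, splice_apply_le hs, splice_apply_le hc]
  · have hct : p ≤ t := (not_le.mp hc).le
    have hs : p ≤ s := by rw [Fin.le_def] at hc ⊢; omega
    rw [splice_apply_ge hxy hs, splice_apply_ge hxy hct,
      splice_apply_ge hxy.symm hs, splice_apply_ge hxy.symm hct]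
    ring

lemma joint_splice (hn : 0 < n) (p : Fin n) (x y : Fin n → Bool) (hxy : x p = y p) :
    jointX α β (splice p x y) * jointX α β (splice p y x) = jointX α β x * jointX α β y := by
  unfold jointX
  rw [dif_pos hn, dif_pos hn, dif_pos hn, dif_pos hn]
  have h0 : splice p x y ⟨0, hn⟩ = x ⟨0, hn⟩ := splice_apply_le (by simp [Fin.le_def])
  have h0' : splice p y x ⟨0, hn⟩ = y ⟨0, hn⟩ := splice_apply_le (by simp [Fin.le_def])
  rw [h0, h0', mul_mul_mul_comm]
  conv_rhs => rw [mul_mul_mul_comm]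
  congr 1
  rw [← Finset.prod_mul_distrib, ← Finset.prod_mul_distrib]
  exact Finset.prod_congr rfl fun i _ => splice_pair α β p x y hxy _ _ rfl

/-- Conditional independence of left- and right-measurable functions given `X_p`. -/
lemma condIndep (hn : 0 < n) (p : Fin n) (a : Bool) (F G : (Fin n → Bool) → ℝ)
    (hF : ∀ x y, (∀ t, t ≤ p → x t = y t) → F x = F y)
    (hG : ∀ x y, (∀ t, p ≤ t → x t = y t) → G x = G y) :
    (∑ x : Fin n → Bool, (if x p = a then jointX α β x else 0) * F x * G x) *
      (∑ x : Fin n → Bool, (if x p = a then jointX α β x else 0)) =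
    (∑ x : Fin n → Bool, (if x p = a then jointX α β x else 0) * F x) *
      (∑ x : Fin n → Bool, (if x p = a then jointX α β x else 0) * G x) := by
  classical
  set φ : (Fin n → Bool) → ℝ := fun x => if x p = a then jointX α β x else 0 with hφdef
  have hφ : ∀ x, φ x = if x p = a then jointX α β x else 0 := fun _ => rfl
  show (∑ x : Fin n → Bool, φ x * F x * G x) * (∑ x : Fin n → Bool, φ x)
      = (∑ x : Fin n → Bool, φ x * F x) * (∑ x : Fin n → Bool, φ x * G x)
  have hL : (∑ z : (Fin n → Bool) × (Fin n → Bool), φ z.1 * F z.1 * G z.1 * φ z.2)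
      = ∑ i : Fin n → Bool, ∑ j : Fin n → Bool, φ i * F i * G i * φ j :=
    Fintype.sum_prod_type _
  have hR : (∑ z : (Fin n → Bool) × (Fin n → Bool), φ z.1 * F z.1 * (φ z.2 * G z.2))
      = ∑ i : Fin n → Bool, ∑ j : Fin n → Bool, φ i * F i * (φ j * G j) :=
    Fintype.sum_prod_type _
  rw [Finset.sum_mul_sum, Finset.sum_mul_sum, ← hL, ← hR]
  have hinv : Function.Involutive
      (fun z : (Fin n → Bool) × (Fin n → Bool) => (splice p z.1 z.2, splice p z.2 z.1)) := by
    intro z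
    obtain ⟨z1, z2⟩ := z
    simp only [Prod.mk.injEq]
    constructor <;> funext t <;> unfold splice <;> by_cases ht : t ≤ p <;> simp [ht]
  refine Fintype.sum_equiv hinv.toPerm _ _ fun z => ?_
  simp only [Function.Involutive.coe_toPerm]
  have hs1 : splice p z.1 z.2 p = z.1 p := splice_apply_le le_rfl
  have hs2 : splice p z.2 z.1 p = z.2 p := splice_apply_le le_rfl
  by_cases h1 : z.1 p = a
  · by_cases h2 : z.2 p = a
    · have hxy : z.1 p = z.2 p := h1.trans h2.symm
      have hFx : F (splice p z.1 z.2) = F z.1 :=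
        hF _ _ fun t ht => splice_apply_le ht
      have hGx : G (splice p z.2 z.1) = G z.1 :=
        hG _ _ fun t ht => splice_apply_ge hxy.symm ht
      have key := joint_splice (α := α) (β := β) hn p z.1 z.2 hxy
      rw [hφ, hφ, hφ, hφ, hs1, hs2, h1, h2, if_pos rfl, if_pos rfl, if_pos rfl, if_pos rfl,
        hFx, hGx]
      linear_combination (-(F z.1 * G z.1)) * key
    · rw [hφ, hφ, hφ, hφ, hs1, hs2]
      simp [h2]
  · rw [hφ, hφ, hφ, hφ, hs1, hs2]
    simp [h1]

end Aux2
section Aux3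

lemma logRatio_bot {c d : ℝ} (hc : c ≤ 0) : logRatio c d = ⊥ := if_pos hc

lemma le_zero_of_logRatio_le_bot {c d : ℝ} (h : logRatio c d ≤ ⊥) : c ≤ 0 := by
  unfold logRatio at h
  split_ifs at h with h1 h2 <;> simp_all

lemma logRatio_le_coe_iff {c d e : ℝ} (hc : 0 ≤ c) (hd : 0 ≤ d) :
    logRatio c d ≤ (e : EReal) ↔ c ≤ Real.exp e * d := by
  unfold logRatio
  split_ifs with h1 h2
  · simp only [bot_le, true_iff]
    have : c = 0 := le_antisymm h1 hc
    rw [this]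
    positivity
  · simp only [top_le_iff]
    have hd0 : d = 0 := le_antisymm h2 hd
    constructor
    · intro h; exact absurd h (by simp)
    · intro h
      rw [hd0, mul_zero] at h
      exact absurd (lt_of_lt_of_le (not_le.mp h1) h) (lt_irrefl 0)
  · push_neg at h1 h2
    rw [EReal.coe_le_coe_iff, Real.log_le_iff_le_exp (div_pos h1 h2), div_le_iff₀ h2]

lemma logRatio_sum_le {ι : Type*} [Fintype ι] (w w' : ι → ℝ) (hw : ∀ i, 0 ≤ w i)
    (hw' : ∀ i, 0 ≤ w' i) (E : EReal) (h : ∀ i, logRatio (w i) (w' i) ≤ E) :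
    logRatio (∑ i, w i) (∑ i, w' i) ≤ E := by
  induction E using EReal.rec with
  | bot =>
    rw [logRatio_bot (Finset.sum_nonpos fun i _ => le_zero_of_logRatio_le_bot (h i))]
  | coe e =>
    rw [logRatio_le_coe_iff (Finset.sum_nonneg fun i _ => hw i)
      (Finset.sum_nonneg fun i _ => hw' i)]
    calc ∑ i, w i ≤ ∑ i, Real.exp e * w' i :=
          Finset.sum_le_sum fun i _ => (logRatio_le_coe_iff (hw i) (hw' i)).mp (h i)
      _ = Real.exp e * ∑ i, w' i := by rw [Finset.mul_sum]
  | top => exact le_top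

lemma logRatio_mul_le {u u' v v' : ℝ} (hu : 0 ≤ u) (hu' : 0 ≤ u') (hv : 0 ≤ v) (hv' : 0 ≤ v') :
    logRatio (u * v) (u' * v') ≤ logRatio u u' + logRatio v v' := by
  by_cases hu0 : u ≤ 0
  · rw [logRatio_bot (mul_nonpos_iff.mpr (Or.inr ⟨hu0, hv⟩))]; exact bot_le
  by_cases hv0 : v ≤ 0
  · rw [logRatio_bot (mul_nonpos_iff.mpr (Or.inl ⟨hu, hv0⟩))]; exact bot_le
  push_neg at hu0 hv0
  have hne1 : logRatio u u' ≠ ⊥ := by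
    unfold logRatio; rw [if_neg (not_le.mpr hu0)]; split <;> simp
  have hne2 : logRatio v v' ≠ ⊥ := by
    unfold logRatio; rw [if_neg (not_le.mpr hv0)]; split <;> simp
  by_cases hu'0 : u' ≤ 0
  · have : logRatio u u' = ⊤ := by unfold logRatio; rw [if_neg (not_le.mpr hu0), if_pos hu'0]
    rw [this, EReal.top_add_of_ne_bot hne2]
    exact le_top
  by_cases hv'0 : v' ≤ 0
  · have : logRatio v v' = ⊤ := by unfold logRatio; rw [if_neg (not_le.mpr hv0), if_pos hv'0]
    rw [this, add_comm, EReal.top_add_of_ne_bot hne1]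
    exact le_top
  push_neg at hu'0 hv'0
  have huv : ¬ u * v ≤ 0 := not_le.mpr (mul_pos hu0 hv0)
  have huv' : ¬ u' * v' ≤ 0 := not_le.mpr (mul_pos hu'0 hv'0)
  unfold logRatio
  rw [if_neg huv, if_neg huv', if_neg (not_le.mpr hu0), if_neg (not_le.mpr hu'0),
    if_neg (not_le.mpr hv0), if_neg (not_le.mpr hv'0), ← EReal.coe_add]
  rw [EReal.coe_le_coe_iff]
  have : u * v / (u' * v') = (u / u') * (v / v') := by ring
  rw [this, Real.log_mul (ne_of_gt (div_pos hu0 hu'0)) (ne_of_gt (div_pos hv0 hv'0))]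

end Aux3
section Aux4

variable {n : ℕ} {α β : ℝ}

lemma condY_factor (hα : 0 < α) (hαβ : α ≤ β) (hβ : β < 1) (hn : 0 < n) (p : Fin n)
    (r : Fin n → Bool → ℝ) (c : Bool) (g : Fin n → Option Bool) :
    condY α β r p c {y | ∀ t ∈ Finset.univ, y t = g t}
      = condY α β r p c {y | ∀ t ∈ Finset.Iic p, y t = g t}
        * ∑ b : Option Bool,
            condY α β r p c {y | ∀ t ∈ Finset.Ici p, y t = Function.update g p b t} := by
  classical
  have huniv : (Finset.univ : Finset (Fin n)) = Finset.Iic p ∪ Finset.Ioi p := by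
    ext t
    simp only [Finset.mem_univ, Finset.mem_union, Finset.mem_Iic, Finset.mem_Ioi, true_iff]
    exact le_or_gt t p
  have hdisj : Disjoint (Finset.Iic p) (Finset.Ioi p) :=
    Finset.disjoint_left.mpr fun t ht1 ht2 =>
      absurd (Finset.mem_Ioi.mp ht2) (not_lt.mpr (Finset.mem_Iic.mp ht1))
  have hIci : Finset.Ici p = insert p (Finset.Ioi p) := by
    ext t
    simp only [Finset.mem_Ici, Finset.mem_insert, Finset.mem_Ioi]
    constructor
    · intro h
      rcases eq_or_lt_of_le h with h | h
      · exact Or.inl h.symm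
      · exact Or.inr h
    · rintro (rfl | h)
      · exact le_rfl
      · exact h.le
  have hnotmem : p ∉ Finset.Ioi p := by simp
  set φ : (Fin n → Bool) → ℝ := fun x => if x p = c then jointX α β x else 0 with hφdef
  have hφ : ∀ x, φ x = if x p = c then jointX α β x else 0 := fun _ => rfl
  set F : (Fin n → Bool) → ℝ := fun x => ∏ t ∈ Finset.Iic p, kk r t (x t) (g t) with hFdef
  set G : (Fin n → Bool) → ℝ := fun x => ∏ t ∈ Finset.Ioi p, kk r t (x t) (g t) with hGdef
  have hD : prX α β {x : Fin n → Bool | x p = c} = ∑ x : Fin n → Bool, φ x := by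
    unfold prX
    exact Finset.sum_congr rfl fun x _ => indicator_setOf p c x
  have hDpos : (0:ℝ) < ∑ x : Fin n → Bool, φ x := hD ▸ prX_pos hα hαβ hβ p c
  have hNu : prXY α β r {x : Fin n → Bool | x p = c} {y | ∀ t ∈ Finset.univ, y t = g t}
      = ∑ x : Fin n → Bool, φ x * F x * G x := by
    rw [prXY_cyl]
    refine Finset.sum_congr rfl fun x _ => ?_
    rw [indicator_setOf, show (Finset.univ : Finset (Fin n)) = Finset.Iic p ∪ Finset.Ioi p
      from huniv, Finset.prod_union hdisj, ← mul_assoc]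
  have hNl : prXY α β r {x : Fin n → Bool | x p = c} {y | ∀ t ∈ Finset.Iic p, y t = g t}
      = ∑ x : Fin n → Bool, φ x * F x := by
    rw [prXY_cyl]
    exact Finset.sum_congr rfl fun x _ => by rw [indicator_setOf]
  have hNr : ∀ b : Option Bool,
      prXY α β r {x : Fin n → Bool | x p = c}
        {y | ∀ t ∈ Finset.Ici p, y t = Function.update g p b t}
      = kk r p c b * ∑ x : Fin n → Bool, φ x * G x := by
    intro b
    rw [prXY_cyl, Finset.mul_sum]
    refine Finset.sum_congr rfl fun x _ => ?_
    rw [indicator_setOf, hIci, Finset.prod_insert hnotmem, Function.update_self]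
    have hprod : (∏ t ∈ Finset.Ioi p, kk r t (x t) (Function.update g p b t)) = G x :=
      Finset.prod_congr rfl fun t ht => by
        rw [Function.update_of_ne (Finset.mem_Ioi.mp ht).ne']
    rw [hprod]
    by_cases hx : x p = c
    · rw [hφ, if_pos hx, hx]; ring
    · rw [hφ, if_neg hx]; ring
  have hF : ∀ x y, (∀ t, t ≤ p → x t = y t) → F x = F y := fun x y h =>
    Finset.prod_congr rfl fun t ht => by rw [h t (Finset.mem_Iic.mp ht)]
  have hG : ∀ x y, (∀ t, p ≤ t → x t = y t) → G x = G y := fun x y h =>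
    Finset.prod_congr rfl fun t ht => by rw [h t (Finset.mem_Ioi.mp ht).le]
  have hCI := condIndep (α := α) (β := β) hn p c F G hF hG
  unfold condY
  rw [hD, hNu, hNl]
  have hsum : (∑ b : Option Bool,
      prXY α β r {x : Fin n → Bool | x p = c}
        {y | ∀ t ∈ Finset.Ici p, y t = Function.update g p b t} / ∑ x : Fin n → Bool, φ x)
      = (∑ x : Fin n → Bool, φ x * G x) / ∑ x : Fin n → Bool, φ x := by
    rw [show (∑ b : Option Bool,
        prXY α β r {x : Fin n → Bool | x p = c}
          {y | ∀ t ∈ Finset.Ici p, y t = Function.update g p b t} / ∑ x : Fin n → Bool, φ x)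
        = ∑ b : Option Bool,
            kk r p c b * (∑ x : Fin n → Bool, φ x * G x) / ∑ x : Fin n → Bool, φ x from
      Finset.sum_congr rfl fun b _ => by rw [hNr b]]
    rw [← Finset.sum_div, ← Finset.sum_mul, sum_kk, one_mul]
  rw [hsum]
  field_simp
  linear_combination hCI
end Aux4

lemma leak_subadd {n : ℕ} {α β : ℝ} (hα : 0 < α) (hαβ : α ≤ β) (hβ : β < 1)
    (hn : 0 < n) (p : Fin n) (r : Fin n → Bool → ℝ) (hr : validMech r) :
    leak α β r p ≤ leakOn α β r p (Finset.Iic p) + leakOn α β r p (Finset.Ici p) := by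
  have hcond_nonneg : ∀ (c : Bool) (T : Finset (Fin n)) (g : Fin n → Option Bool),
      0 ≤ condY α β r p c {y | ∀ t ∈ T, y t = g t} := by
    intro c T g
    unfold condY
    refine div_nonneg ?_ (prX_pos hα hαβ hβ p c).le
    rw [prXY_cyl]
    exact Finset.sum_nonneg fun x _ => mul_nonneg
      (Set.indicator_nonneg (fun x _ => (jointX_pos hα hαβ hβ x).le) x)
      (Finset.prod_nonneg fun t _ => kk_nonneg hr t (x t) (g t))
  show (⨆ g : Fin n → Option Bool, ⨆ a : Bool,
      logRatio (condY α β r p a {y | ∀ t ∈ Finset.univ, y t = g t})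
               (condY α β r p (!a) {y | ∀ t ∈ Finset.univ, y t = g t})) ≤ _
  refine iSup_le fun g => iSup_le fun a => ?_
  rw [condY_factor hα hαβ hβ hn p r a g, condY_factor hα hαβ hβ hn p r (!a) g]
  refine le_trans (logRatio_mul_le (hcond_nonneg a _ g) (hcond_nonneg (!a) _ g)
      (Finset.sum_nonneg fun b _ => hcond_nonneg a _ _)
      (Finset.sum_nonneg fun b _ => hcond_nonneg (!a) _ _)) ?_
  refine add_le_add ?_ ?_
  · show _ ≤ (⨆ g' : Fin n → Option Bool, ⨆ a' : Bool,
        logRatio (condY α β r p a' {y | ∀ t ∈ Finset.Iic p, y t = g' t})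
                 (condY α β r p (!a') {y | ∀ t ∈ Finset.Iic p, y t = g' t}))
    exact le_iSup_of_le g (le_iSup (fun a' => logRatio
      (condY α β r p a' {y | ∀ t ∈ Finset.Iic p, y t = g t})
      (condY α β r p (!a') {y | ∀ t ∈ Finset.Iic p, y t = g t})) a)
  · refine logRatio_sum_le _ _ (fun b => hcond_nonneg a _ _) (fun b => hcond_nonneg (!a) _ _)
      _ fun b => ?_
    show _ ≤ (⨆ g' : Fin n → Option Bool, ⨆ a' : Bool,
        logRatio (condY α β r p a' {y | ∀ t ∈ Finset.Ici p, y t = g' t})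
                 (condY α β r p (!a') {y | ∀ t ∈ Finset.Ici p, y t = g' t}))
    exact le_iSup_of_le (Function.update g p b) (le_iSup (fun a' => logRatio
      (condY α β r p a' {y | ∀ t ∈ Finset.Ici p, y t = Function.update g p b t})
      (condY α β r p (!a') {y | ∀ t ∈ Finset.Ici p, y t = Function.update g p b t})) a)
/-- For any local redaction mechanism the leakage about `X_p` is at most the
sum of the leakages of the left release `Y^{(ℓ)} = (Y_1,…,Y_p)` and of the right release
`Y^{(r)} = (Y_p,…,Y_n)`; consequently, a 3R mechanism with `ε_ℓ + ε_r ≤ ε` whose parameters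
are chosen so that the one-sided leakages are at most `ε_ℓ` resp. `ε_r` is `ε`-private. -/
theorem statement0 {n : ℕ} (hn : 1 ≤ n) (p : Fin n) (α β : ℝ)
    (hα : 0 < α) (hαβ : α ≤ β) (hβ : β < 1) :
    (∀ r : Fin n → Bool → ℝ, validMech r →
      leak α β r p ≤ leakOn α β r p (Finset.Iic p) + leakOn α β r p (Finset.Ici p)) ∧
    (∀ (ε εl εr : ℝ) (q : Fin n → ℝ) (r : Fin n → Bool → ℝ),
      0 < εl → 0 < εr → εl + εr ≤ ε →
      (∀ t ∈ set3M α β p εl εr, 0 < q t ∧ q t ≤ 1) →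
      validMech r →
      is3R r (set3S α β p εl εr) (set3M α β p εl εr) (set3L α β p εl εr) q →
      leakOn α β r p (Finset.Iic p) ≤ (εl : EReal) →
      leakOn α β r p (Finset.Ici p) ≤ (εr : EReal) →
      leak α β r p ≤ (ε : EReal)) := by
  constructor
  · intro r hr
    exact leak_subadd hα hαβ hβ hn p r hr
  · intro ε εl εr q r hεl hεr hsum hq hr h3r hL hR
    calc leak α β r p
        ≤ leakOn α β r p (Finset.Iic p) + leakOn α β r p (Finset.Ici p) :=
          leak_subadd hα hαβ hβ hn p r hr
      _ ≤ (εl : EReal) + (εr : EReal) := add_le_add hL hR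
      _ ≤ (ε : EReal) := by
          rw [← EReal.coe_add]
          exact EReal.coe_le_coe_iff.mpr hsum
end
end

section
/- Let ε_ℓ, ε_r > 0 with ε_ℓ + ε_r = ε and let S = R_{S|ε_ℓ}^{(ℓ)} ∪ R_{S|ε_r}^{(r)}. Then: (1) every data-independent local redaction mechanism that always redacts all indices outside S (i.e., Pr(Y_t=⊥)=1 for all t ∉ S) has utility at most |S|/n; and (2) every 3R mechanism with parameters ε_ℓ, ε_r and any (q_t)_{t∈M}, 0 < q_t ≤ 1, has utility at least |S|/n. Hence such a 3R mechanism always has utility at least that of such a data-independent mechanism. -/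
open Finset
open scoped Classical

noncomputable section

section Helpers

/-- Per-coordinate kernel of the redaction mechanism. -/
def coordK {n : ℕ} (r : Fin n → Bool → ℝ) (x : Fin n → Bool) (s : Fin n)
    (o : Option Bool) : ℝ :=
  o.elim (r s (x s)) (fun b => if b = x s then 1 - r s (x s) else 0)

lemma coordK_sum {n : ℕ} (r : Fin n → Bool → ℝ) (x : Fin n → Bool) (s : Fin n) :
    ∑ o : Option Bool, coordK r x s o = 1 := by
  rw [Fintype.sum_option, Fintype.sum_bool]
  cases hx : x s <;> simp [coordK, hx]

lemma mechK_eq_prod_coordK {n : ℕ} (r : Fin n → Bool → ℝ) (x : Fin n → Bool)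
    (y : Fin n → Option Bool) : mechK r x y = ∏ s, coordK r x s (y s) := rfl

lemma mech_marginal {n : ℕ} (r : Fin n → Bool → ℝ) (x : Fin n → Bool) (t : Fin n)
    (φ : Option Bool → ℝ) :
    ∑ y : Fin n → Option Bool, mechK r x y * φ (y t)
      = ∑ o : Option Bool, coordK r x t o * φ o := by
  have h1 : ∀ y : Fin n → Option Bool, mechK r x y * φ (y t)
      = ∏ s, (coordK r x s (y s) * (if s = t then φ (y s) else 1)) := by
    intro y
    rw [Finset.prod_mul_distrib, Finset.prod_ite_eq' Finset.univ t (fun s => φ (y s))]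
    simp [mechK_eq_prod_coordK]
  simp only [h1]
  have h2 := Finset.prod_univ_sum (fun _ : Fin n => (Finset.univ : Finset (Option Bool)))
    (fun s o => coordK r x s o * (if s = t then φ o else 1))
  rw [Fintype.piFinset_univ] at h2
  rw [← h2]
  have h3 : ∀ s : Fin n,
      (∑ o : Option Bool, coordK r x s o * (if s = t then φ o else 1))
        = if s = t then (∑ o : Option Bool, coordK r x t o * φ o) else 1 := by
    intro s
    by_cases hs : s = t
    · subst hs; simp
    · simp only [if_neg hs, mul_one]; exact coordK_sum r x s
  rw [Finset.prod_congr rfl (fun s _ => h3 s), Finset.prod_ite_eq' Finset.univ t]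
  simp

lemma mech_correct {n : ℕ} (r : Fin n → Bool → ℝ) (x : Fin n → Bool) (t : Fin n) :
    ∑ y : Fin n → Option Bool, mechK r x y * (if y t = some (x t) then (1:ℝ) else 0)
      = 1 - r t (x t) := by
  rw [mech_marginal r x t (fun o => if o = some (x t) then (1:ℝ) else 0)]
  rw [Fintype.sum_option, Fintype.sum_bool]
  cases hx : x t <;> simp [coordK, hx]

lemma mech_none {n : ℕ} (r : Fin n → Bool → ℝ) (x : Fin n → Bool) (t : Fin n) :
    ∑ y : Fin n → Option Bool, mechK r x y * (if y t = none then (1:ℝ) else 0)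
      = r t (x t) := by
  rw [mech_marginal r x t (fun o => if o = none then (1:ℝ) else 0)]
  rw [Fintype.sum_option, Fintype.sum_bool]
  cases hx : x t <;> simp [coordK, hx]

end Helpers
section Helpers2

lemma sum_chain (T : Bool → Bool → ℝ) (hT : ∀ a, T a false + T a true = 1) :
    ∀ (m : ℕ) (g : Bool → ℝ),
      (∑ x : Fin (m+1) → Bool, g (x 0) * ∏ i : Fin m, T (x i.castSucc) (x i.succ))
        = g false + g true := by
  intro m
  induction m with
  | zero =>
    intro g
    rw [← Equiv.sum_comp (Equiv.funUnique (Fin 1) Bool).symm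
        (fun x : Fin 1 → Bool => g (x 0) * ∏ i : Fin 0, T (x i.castSucc) (x i.succ))]
    simp [Fintype.sum_bool, add_comm]
  | succ m ih =>
    intro g
    rw [← Equiv.sum_comp (Fin.consEquiv (fun _ : Fin (m+2) => Bool))
        (fun x : Fin (m+2) → Bool => g (x 0) * ∏ i : Fin (m+1), T (x i.castSucc) (x i.succ))]
    rw [Fintype.sum_prod_type]
    simp only [Fin.consEquiv_apply]
    have hinner : ∀ b : Bool,
        (∑ x : Fin (m+1) → Bool,
          g ((Fin.cons b x : Fin (m+2) → Bool) 0) *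
            ∏ i : Fin (m+1), T ((Fin.cons b x : Fin (m+2) → Bool) i.castSucc) ((Fin.cons b x : Fin (m+2) → Bool) i.succ)) = g b := by
      intro b
      have hx : ∀ x : Fin (m+1) → Bool,
          g ((Fin.cons b x : Fin (m+2) → Bool) 0) *
            ∏ i : Fin (m+1), T ((Fin.cons b x : Fin (m+2) → Bool) i.castSucc) ((Fin.cons b x : Fin (m+2) → Bool) i.succ)
          = (fun c => g b * T b c) (x 0) * ∏ i : Fin m, T (x i.castSucc) (x i.succ) := by
        intro x
        rw [Fin.prod_univ_succ]
        have e1 : ((Fin.cons b x : Fin (m+2) → Bool) ((0:Fin (m+1)).castSucc)) = b := by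
          rw [Fin.castSucc_zero]; exact Fin.cons_zero _ _
        have e2 : ((Fin.cons b x : Fin (m+2) → Bool) ((0:Fin (m+1)).succ)) = x 0 :=
          Fin.cons_succ _ _ _
        have e3 : ∀ i : Fin m,
            T ((Fin.cons b x : Fin (m+2) → Bool) (i.succ.castSucc))
                ((Fin.cons b x : Fin (m+2) → Bool) (i.succ.succ))
              = T (x i.castSucc) (x i.succ) := by
          intro i
          rw [← Fin.succ_castSucc, Fin.cons_succ, Fin.cons_succ]
        rw [e1, e2, Fin.cons_zero, Finset.prod_congr rfl (fun i _ => e3 i)]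
        ring
      rw [Finset.sum_congr rfl (fun x _ => hx x), ih (fun c => g b * T b c)]
      rw [← mul_add, hT b, mul_one]
    rw [Finset.sum_congr rfl (fun b _ => hinner b), Fintype.sum_bool, add_comm]

end Helpers2
section Helpers3

lemma jointX_succ (α β : ℝ) (m : ℕ) (x : Fin (m+1) → Bool) :
    jointX α β x
      = statDist α β (x 0) * ∏ i : Fin m, transP α β (x i.castSucc) (x i.succ) := by
  simp only [jointX]
  rw [dif_pos (Nat.succ_pos m)]
  congr 1

lemma transP_nonneg {α β : ℝ} (hα : 0 < α) (hαβ : α ≤ β) (hβ : β < 1) (a b : Bool) :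
    0 ≤ transP α β a b := by
  cases a <;> cases b <;> simp [transP] <;> linarith

lemma transP_rowsum (α β : ℝ) (a : Bool) :
    transP α β a false + transP α β a true = 1 := by
  cases a <;> simp [transP]

lemma statDist_nonneg {α β : ℝ} (hα : 0 < α) (hαβ : α ≤ β) (b : Bool) :
    0 ≤ statDist α β b := by
  cases b <;> simp only [statDist] <;> apply div_nonneg <;> linarith

lemma statDist_sum {α β : ℝ} (hα : 0 < α) (hαβ : α ≤ β) :
    statDist α β false + statDist α β true = 1 := by
  have h : α + β ≠ 0 := by intro h0; linarith
  simp only [statDist]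
  field_simp
  ring

lemma jointX_nonneg {α β : ℝ} (hα : 0 < α) (hαβ : α ≤ β) (hβ : β < 1)
    {m : ℕ} (x : Fin (m+1) → Bool) : 0 ≤ jointX α β x := by
  rw [jointX_succ]
  exact mul_nonneg (statDist_nonneg hα hαβ _)
    (Finset.prod_nonneg fun i _ => transP_nonneg hα hαβ hβ _ _)

lemma sum_jointX {α β : ℝ} (hα : 0 < α) (hαβ : α ≤ β) (hβ : β < 1) (m : ℕ) :
    ∑ x : Fin (m+1) → Bool, jointX α β x = 1 := by
  have h := sum_chain (transP α β) (transP_rowsum α β) m (statDist α β)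
  calc ∑ x : Fin (m+1) → Bool, jointX α β x
      = ∑ x : Fin (m+1) → Bool,
          statDist α β (x 0) * ∏ i : Fin m, transP α β (x i.castSucc) (x i.succ) :=
        Finset.sum_congr rfl (fun x _ => jointX_succ α β m x)
    _ = statDist α β false + statDist α β true := h
    _ = 1 := statDist_sum hα hαβ

end Helpers3
section Helpers4

lemma utility_eq (α β : ℝ) {n : ℕ} (r : Fin n → Bool → ℝ) :
    utility α β r
      = (1 / (n:ℝ)) * ∑ t : Fin n, ∑ x : Fin n → Bool, jointX α β x * (1 - r t (x t)) := by
  unfold utility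
  congr 1
  have hx : ∀ x : Fin n → Bool,
      (∑ y : Fin n → Option Bool,
        jointX α β x * mechK r x y * ∑ t : Fin n, (if y t = some (x t) then (1:ℝ) else 0))
      = ∑ t : Fin n, jointX α β x * (1 - r t (x t)) := by
    intro x
    have h1 : ∀ y : Fin n → Option Bool,
        jointX α β x * mechK r x y * ∑ t : Fin n, (if y t = some (x t) then (1:ℝ) else 0)
        = ∑ t : Fin n,
            jointX α β x * (mechK r x y * (if y t = some (x t) then (1:ℝ) else 0)) := by
      intro y
      rw [Finset.mul_sum]
      exact Finset.sum_congr rfl fun t _ => by ring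
    rw [Finset.sum_congr rfl fun y _ => h1 y, Finset.sum_comm]
    refine Finset.sum_congr rfl fun t _ => ?_
    rw [← Finset.mul_sum, mech_correct]
  rw [Finset.sum_congr rfl fun x _ => hx x, Finset.sum_comm]

lemma prY_none (α β : ℝ) {n : ℕ} (r : Fin n → Bool → ℝ) (t : Fin n) :
    prY α β r {y | y t = none} = ∑ x : Fin n → Bool, jointX α β x * r t (x t) := by
  unfold prY prXY
  refine Finset.sum_congr rfl fun x _ => ?_
  simp only [Set.indicator_univ]
  have h1 : ∀ y : Fin n → Option Bool,
      ({y : Fin n → Option Bool | y t = none}).indicator (mechK r x) y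
        = mechK r x y * (if y t = none then (1:ℝ) else 0) := by
    intro y
    rw [Set.indicator_apply]
    by_cases h : y t = none <;> simp [h]
  rw [← Finset.mul_sum]
  congr 1
  rw [Finset.sum_congr rfl fun y _ => h1 y, mech_none]

lemma upper_bound {α β : ℝ} (hα : 0 < α) (hαβ : α ≤ β) (hβ : β < 1)
    {m : ℕ} (S : Finset (Fin (m+1))) (r : Fin (m+1) → Bool → ℝ)
    (hv : validMech r)
    (hred : ∀ t ∉ S, prY α β r {y | y t = none} = 1) :
    utility α β r ≤ (S.card : ℝ) / ((m+1 : ℕ) : ℝ) := by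
  rw [utility_eq]
  have hle : ∀ t : Fin (m+1),
      (∑ x : Fin (m+1) → Bool, jointX α β x * (1 - r t (x t)))
        ≤ (if t ∈ S then (1:ℝ) else 0) := by
    intro t
    by_cases ht : t ∈ S
    · rw [if_pos ht]
      calc (∑ x : Fin (m+1) → Bool, jointX α β x * (1 - r t (x t)))
          ≤ ∑ x : Fin (m+1) → Bool, jointX α β x := by
            refine Finset.sum_le_sum fun x _ => ?_
            have h1 := (hv t (x t)).1
            have h2 := jointX_nonneg hα hαβ hβ x
            nlinarith
        _ = 1 := sum_jointX hα hαβ hβ m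
    · rw [if_neg ht]
      have h1 := hred t ht
      rw [prY_none] at h1
      have h2 : (∑ x : Fin (m+1) → Bool, jointX α β x * (1 - r t (x t)))
          = (∑ x : Fin (m+1) → Bool, jointX α β x)
            - ∑ x : Fin (m+1) → Bool, jointX α β x * r t (x t) := by
        rw [← Finset.sum_sub_distrib]
        exact Finset.sum_congr rfl fun x _ => by ring
      rw [h2, sum_jointX hα hαβ hβ m, h1]
      norm_num
  have hnn : (0:ℝ) ≤ 1 / ((m+1 : ℕ) : ℝ) := by positivity
  calc (1 / ((m+1 : ℕ) : ℝ)) *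
        ∑ t : Fin (m+1), ∑ x : Fin (m+1) → Bool, jointX α β x * (1 - r t (x t))
      ≤ (1 / ((m+1 : ℕ) : ℝ)) * ∑ t : Fin (m+1), (if t ∈ S then (1:ℝ) else 0) :=
        mul_le_mul_of_nonneg_left (Finset.sum_le_sum fun t _ => hle t) hnn
    _ = (1 / ((m+1 : ℕ) : ℝ)) * (S.card : ℝ) := by
        rw [Finset.sum_ite_mem, Finset.univ_inter, Finset.sum_const, nsmul_eq_mul, mul_one]
    _ = (S.card : ℝ) / ((m+1 : ℕ) : ℝ) := by ring

lemma lower_bound {α β : ℝ} (hα : 0 < α) (hαβ : α ≤ β) (hβ : β < 1)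
    {m : ℕ} (S : Finset (Fin (m+1))) (r : Fin (m+1) → Bool → ℝ)
    (hv : validMech r)
    (hzero : ∀ t ∈ S, ∀ x, r t x = 0) :
    (S.card : ℝ) / ((m+1 : ℕ) : ℝ) ≤ utility α β r := by
  rw [utility_eq]
  have hge : ∀ t : Fin (m+1),
      (0:ℝ) ≤ ∑ x : Fin (m+1) → Bool, jointX α β x * (1 - r t (x t)) := by
    intro t
    refine Finset.sum_nonneg fun x _ => ?_
    have h1 := (hv t (x t)).2
    exact mul_nonneg (jointX_nonneg hα hαβ hβ x) (by linarith)
  have hone : ∀ t ∈ S,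
      (∑ x : Fin (m+1) → Bool, jointX α β x * (1 - r t (x t))) = 1 := by
    intro t ht
    calc (∑ x : Fin (m+1) → Bool, jointX α β x * (1 - r t (x t)))
        = ∑ x : Fin (m+1) → Bool, jointX α β x := by
          refine Finset.sum_congr rfl fun x _ => ?_
          rw [hzero t ht (x t)]; ring
      _ = 1 := sum_jointX hα hαβ hβ m
  have hcard : (S.card : ℝ)
      ≤ ∑ t : Fin (m+1), ∑ x : Fin (m+1) → Bool, jointX α β x * (1 - r t (x t)) := by
    calc (S.card : ℝ)
        = ∑ t ∈ S, ∑ x : Fin (m+1) → Bool, jointX α β x * (1 - r t (x t)) := by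
          rw [Finset.sum_congr rfl hone, Finset.sum_const, nsmul_eq_mul, mul_one]
      _ ≤ _ := Finset.sum_le_sum_of_subset_of_nonneg (Finset.subset_univ S)
          (fun t _ _ => hge t)
  have hnn : (0:ℝ) ≤ 1 / ((m+1 : ℕ) : ℝ) := by positivity
  calc (S.card : ℝ) / ((m+1 : ℕ) : ℝ) = (1 / ((m+1 : ℕ) : ℝ)) * (S.card : ℝ) := by ring
    _ ≤ _ := mul_le_mul_of_nonneg_left hcard hnn

end Helpers4

/-- With `S = R_{S|ε_ℓ}^{(ℓ)} ∪ R_{S|ε_r}^{(r)}`: (1) every data-independent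
local redaction mechanism that always redacts all indices outside `S` has utility at most
`|S|/n`; (2) every 3R mechanism with parameters `ε_ℓ, ε_r, (q_t)` has utility at least `|S|/n`;
hence the 3R mechanism's utility is at least that of the data-independent mechanism. -/
theorem statement3 {n : ℕ} (hn : 1 ≤ n) (p : Fin n) (α β : ℝ)
    (hα : 0 < α) (hαβ : α ≤ β) (hβ : β < 1)
    (ε εl εr : ℝ) (hεl : 0 < εl) (hεr : 0 < εr) (hsum : εl + εr = ε) :
    (∀ r : Fin n → Bool → ℝ, validMech r → dataIndep r →
      (∀ t : Fin n, t ∉ set3S α β p εl εr → prY α β r {y | y t = none} = 1) →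
      utility α β r ≤ ((set3S α β p εl εr).card : ℝ) / (n : ℝ)) ∧
    (∀ (q : Fin n → ℝ) (r' : Fin n → Bool → ℝ),
      (∀ t ∈ set3M α β p εl εr, 0 < q t ∧ q t ≤ 1) →
      validMech r' →
      is3R r' (set3S α β p εl εr) (set3M α β p εl εr) (set3L α β p εl εr) q →
      ((set3S α β p εl εr).card : ℝ) / (n : ℝ) ≤ utility α β r') ∧
    (∀ (r : Fin n → Bool → ℝ) (q : Fin n → ℝ) (r' : Fin n → Bool → ℝ),
      validMech r → dataIndep r →
      (∀ t : Fin n, t ∉ set3S α β p εl εr → prY α β r {y | y t = none} = 1) →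
      (∀ t ∈ set3M α β p εl εr, 0 < q t ∧ q t ≤ 1) →
      validMech r' →
      is3R r' (set3S α β p εl εr) (set3M α β p εl εr) (set3L α β p εl εr) q →
      utility α β r ≤ utility α β r') := by
  obtain ⟨m, rfl⟩ : ∃ m, n = m + 1 := ⟨n - 1, by omega⟩
  have part1 : ∀ r : Fin (m+1) → Bool → ℝ, validMech r → dataIndep r →
      (∀ t : Fin (m+1), t ∉ set3S α β p εl εr → prY α β r {y | y t = none} = 1) →
      utility α β r ≤ ((set3S α β p εl εr).card : ℝ) / ((m+1 : ℕ) : ℝ) := by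
    intro r hv _ hred
    exact upper_bound hα hαβ hβ _ r hv hred
  have part2 : ∀ (q : Fin (m+1) → ℝ) (r' : Fin (m+1) → Bool → ℝ),
      (∀ t ∈ set3M α β p εl εr, 0 < q t ∧ q t ≤ 1) →
      validMech r' →
      is3R r' (set3S α β p εl εr) (set3M α β p εl εr) (set3L α β p εl εr) q →
      ((set3S α β p εl εr).card : ℝ) / ((m+1 : ℕ) : ℝ) ≤ utility α β r' := by
    intro q r' _ hv h3r
    exact lower_bound hα hαβ hβ _ r' hv (fun t ht x => (h3r t).2.1 ht x)
  refine ⟨part1, part2, ?_⟩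
  intro r q r' hv hdi hred hq hv' h3r
  exact le_trans (part1 r hv hdi hred) (part2 q r' hq hv' h3r)
end
end
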